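/- The bisimulation distance coincides with the logical distance: for an input-enabled probabilistic automaton, D_b(μ,ν) = sup_{φ ∈ 𝓛_m} |φ(μ) − φ(ν)| for all distributions μ, ν. -/

import Mathlib

open Finset

structure ProbDist (S : Type) [Fintype S] where
  f : S → ℝ
  nonneg : ∀ s, 0 ≤ f s
  sum_one : ∑ s, f s = 1

/-- Probability assigned by a distribution to a set of states. -/
noncomputable def ProbDist.pr {S : Type} [Fintype S] (μ : ProbDist S) (C : Set S) : ℝ :=
  ∑ s, C.indicator μ.f s

/-- μ(A) := Σ_{s : L s = A} μ(s). -/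
noncomputable def pOf {S AP : Type} [Fintype S] (L : S → Finset AP) (μ : ProbDist S)
    (A : Finset AP) : ℝ :=
  μ.pr {s | L s = A}

/-- d_AP(μ,ν) := (1/2) Σ_{A ⊆ AP} |μ(A) − ν(A)|. -/
noncomputable def dAP {S AP : Type} [Fintype S] [Fintype AP] [DecidableEq AP]
    (L : S → Finset AP) (μ ν : ProbDist S) : ℝ :=
  (1 / 2) * ∑ A : Finset AP, |pOf L μ A - pOf L ν A|

/-- A (Segala) probabilistic automaton, image-finite. -/
structure PA (S Act AP : Type) [Fintype S] where
  trans : S → Act → ProbDist S → Prop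
  L : S → Finset AP
  imageFinite : ∀ s a, {μ | trans s a μ}.Finite

def PA.InputEnabled {S Act AP : Type} [Fintype S] (M : PA S Act AP) : Prop :=
  ∀ s a, ∃ μ, M.trans s a μ

noncomputable def PA.probOf {S Act AP : Type} [Fintype S] (M : PA S Act AP)
    (μ : ProbDist S) (A : Finset AP) : ℝ := pOf M.L μ A

/-- Combined transition s --a-->_P μ : μ is a convex combination of one-step successors. -/
def Combined {S Act AP : Type} [Fintype S] (M : PA S Act AP) (s : S) (a : Act)
    (μ : ProbDist S) : Prop :=
  ∃ (n : ℕ) (p : Fin n → ℝ) (ν : Fin n → ProbDist S),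
    (∀ i, 0 ≤ p i) ∧ (∑ i, p i = 1) ∧ (∀ i, M.trans s a (ν i)) ∧
    (∀ t, μ.f t = ∑ i, p i * (ν i).f t)

/-- Lifted transition μ --a--> μ' between distributions. -/
def Lifted {S Act AP : Type} [Fintype S] (M : PA S Act AP) (μ : ProbDist S) (a : Act)
    (μ' : ProbDist S) : Prop :=
  ∃ k : S → ProbDist S, (∀ s, 0 < μ.f s → Combined M s a (k s)) ∧
    (∀ t, μ'.f t = ∑ s, μ.f s * (k s).f t)

/-- ProbDist S carries the topology inherited from ℝ^{|S|}. -/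
noncomputable instance {S : Type} [Fintype S] : TopologicalSpace (ProbDist S) :=
  TopologicalSpace.induced (fun μ : ProbDist S => μ.f) inferInstance

/-- A (discounted) approximate bisimulation: a family of symmetric relations. -/
def IsApproxBisim {S Act AP : Type} [Fintype S] [Fintype AP] [DecidableEq AP]
    (M : PA S Act AP) (γ : ℝ) (R : ℝ → ProbDist S → ProbDist S → Prop) : Prop :=
  (∀ ε, Symmetric (R ε)) ∧ ∀ ε μ ν, R ε μ ν →
    dAP M.L μ ν ≤ ε ∧
    ∀ a μ', Lifted M μ a μ' → ∃ ν', Lifted M ν a ν' ∧ R (ε / γ) μ' ν'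

/-- μ ∼_ε ν. -/
def ApproxBisimilar {S Act AP : Type} [Fintype S] [Fintype AP] [DecidableEq AP]
    (M : PA S Act AP) (γ : ℝ) (ε : ℝ) (μ ν : ProbDist S) : Prop :=
  ∃ R, IsApproxBisim M γ R ∧ R ε μ ν

/-- The bisimulation distance D_b(μ,ν) = inf {ε ≥ 0 : μ ∼_ε ν}. -/
noncomputable def Db {S Act AP : Type} [Fintype S] [Fintype AP] [DecidableEq AP]
    (M : PA S Act AP) (γ : ℝ) (μ ν : ProbDist S) : ℝ :=
  sInf {ε | 0 ≤ ε ∧ ApproxBisimilar M γ ε μ ν}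

/-- Formulas of the modal logic 𝓛_m. -/
inductive Fml (AP Act : Type) : Type 1
  | atom : Finset (Finset AP) → Fml AP Act
  | oplus : Fml AP Act → Set.Icc (0 : ℝ) 1 → Fml AP Act
  | neg : Fml AP Act → Fml AP Act
  | conj : (I : Type) → (I → Fml AP Act) → Fml AP Act
  | dia : Act → Fml AP Act → Fml AP Act

/-- Discounted satisfaction function of a formula. -/
noncomputable def sat {S Act AP : Type} [Fintype S] (M : PA S Act AP) (γ : ℝ) :
    Fml AP Act → ProbDist S → ℝ
  | .atom B, μ => ∑ A ∈ B, M.probOf μ A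
  | .oplus φ p, μ => min (sat M γ φ μ + (p : ℝ)) 1
  | .neg φ, μ => 1 - sat M γ φ μ
  | .conj _ φs, μ => ⨅ i, sat M γ (φs i) μ
  | .dia a φ, μ => ⨆ μ' ∈ {x | Lifted M μ a x}, γ * sat M γ φ μ'

/-!
Soundness: by induction on formulas, `ε`-bisimilar distributions have satisfaction values at
most `ε` apart, so the logical distance `ld` (`logicDist`) bounds `D_b` from below. Completeness: the relations
`ld ≤ ε` form an approximate bisimulation, so `ld μ ν` itself belongs to the set whose infimum
is `D_b μ ν`.

The transfer condition is the heart of completeness. Let `x --a--> x'`. The `a`-successors of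
`y` form a compact set on which `ld x' ·` is continuous, so if all of them were farther than
`ld x y / γ` from `x'`, a single `c > ld x y / γ` would separate them all. Choosing for each
successor `y'` a formula `φ` with `φ x' - φ y' > c`, the conjunction of the `φ ⊕ (1 - φ x')` is
`1` at `x'` and at most `1 - c` at every `y'`; its `⟨a⟩`-formula then separates `x` from `y` by
`γ c > ld x y`.

Continuity of `ld x' ·` comes from soundness once more: total variation distance is itself an
approximate bisimulation (moving two distributions by the same kernel brings them closer), so
every satisfaction function is 1-Lipschitz for it.
-/

theorem sum_posPart_eq_half_sum_abs {ι : Type*} (s : Finset ι) {d : ι → ℝ}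
    (h : ∑ i ∈ s, d i = 0) : ∑ i ∈ s, (d i)⁺ = (1 / 2) * ∑ i ∈ s, |d i| := by
  have habs : ∀ i, |d i| = 2 * (d i)⁺ - d i := fun i => by
    linarith [posPart_add_negPart (d i), posPart_sub_negPart (d i)]
  simp only [habs, Finset.sum_sub_distrib, ← Finset.mul_sum, h]
  ring

theorem sum_le_sum_posPart {ι : Type*} {s t : Finset ι} (hst : s ⊆ t) (d : ι → ℝ) :
    ∑ i ∈ s, d i ≤ ∑ i ∈ t, (d i)⁺ :=
  (Finset.sum_le_sum fun i _ => le_posPart (d i)).trans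
    (Finset.sum_le_sum_of_subset_of_nonneg hst fun i _ _ => posPart_nonneg (d i))

theorem ciInf_le_ciInf_add {ι : Type*} {f g : ι → ℝ} {c : ℝ} (hc : 0 ≤ c)
    (hf : BddBelow (Set.range f)) (h : ∀ i, f i ≤ g i + c) : ⨅ i, f i ≤ (⨅ i, g i) + c := by
  rcases isEmpty_or_nonempty ι with hι | hι
  · simpa only [Real.iInf_of_isEmpty, zero_add] using hc
  · exact le_ciInf_add fun i => (ciInf_le hf i).trans (h i)

theorem continuous_of_abs_sub_le {X : Type*} [TopologicalSpace X] {f : X → ℝ} {d : X → X → ℝ}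
    (hd : ∀ y, Continuous fun x => d x y) (hdiag : ∀ x, d x x = 0)
    (h : ∀ x y, |f x - f y| ≤ d x y) : Continuous f := by
  refine continuous_iff_continuousAt.2 fun y => tendsto_iff_dist_tendsto_zero.2 ?_
  have hdy : Filter.Tendsto (fun x => d x y) (nhds y) (nhds 0) := by
    simpa only [hdiag] using (hd y).tendsto y
  exact squeeze_zero (fun _ => dist_nonneg) (fun x => (Real.dist_eq _ _).trans_le (h x y)) hdy

namespace ProbDist

variable {S : Type} [Fintype S]

theorem f_injective : Function.Injective (ProbDist.f : ProbDist S → S → ℝ) := by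
  rintro ⟨f, _, _⟩ ⟨g, _, _⟩ rfl
  rfl

theorem isEmbedding_f : Topology.IsEmbedding (ProbDist.f : ProbDist S → S → ℝ) :=
  ⟨⟨rfl⟩, f_injective⟩

theorem continuous_f : Continuous (ProbDist.f : ProbDist S → S → ℝ) :=
  continuous_induced_dom

def mixture {ι : Type*} [Fintype ι] (p : ι → ℝ) (hp0 : ∀ i, 0 ≤ p i) (hp1 : ∑ i, p i = 1)
    (w : ι → ProbDist S) : ProbDist S where
  f t := ∑ i, p i * (w i).f t
  nonneg t := Finset.sum_nonneg fun i _ => mul_nonneg (hp0 i) ((w i).nonneg t)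
  sum_one := by
    rw [Finset.sum_comm]
    simp only [← Finset.mul_sum, sum_one, mul_one, hp1]

theorem mixture_f_eq_sum_smul {ι : Type*} [Fintype ι] (p : ι → ℝ) (hp0 : ∀ i, 0 ≤ p i)
    (hp1 : ∑ i, p i = 1) (w : ι → ProbDist S) :
    (mixture p hp0 hp1 w).f = ∑ i, p i • (w i).f := by
  ext t
  simp [mixture, Finset.sum_apply]

def bind (x : ProbDist S) (k : S → ProbDist S) : ProbDist S :=
  mixture x.f x.nonneg x.sum_one k

theorem bind_f (x : ProbDist S) (k : S → ProbDist S) (t : S) :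
    (x.bind k).f t = ∑ s, x.f s * (k s).f t := rfl

theorem continuous_bind (x : ProbDist S) : Continuous fun k : S → ProbDist S => x.bind k := by
  refine continuous_induced_rng.2 (continuous_pi fun t => ?_)
  simp only [Function.comp_apply, bind_f]
  exact continuous_finsetSum _ fun s _ => continuous_const.mul
    (((continuous_apply t).comp continuous_f).comp (continuous_apply s))

noncomputable def tvDist (x y : ProbDist S) : ℝ := (1 / 2) * ∑ s, |x.f s - y.f s|

theorem tvDist_nonneg (x y : ProbDist S) : 0 ≤ tvDist x y :=
  mul_nonneg (by norm_num) (Finset.sum_nonneg fun _ _ => abs_nonneg _)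

theorem tvDist_comm (x y : ProbDist S) : tvDist x y = tvDist y x := by
  simp only [tvDist, abs_sub_comm]

theorem tvDist_self (x : ProbDist S) : tvDist x x = 0 := by
  simp [tvDist]

theorem continuous_tvDist_left (y : ProbDist S) : Continuous fun x => tvDist x y :=
  continuous_const.mul (continuous_finsetSum _ fun s _ =>
    (((continuous_apply s).comp continuous_f).sub continuous_const).abs)

theorem tvDist_bind_le (x y : ProbDist S) (k : S → ProbDist S) :
    tvDist (x.bind k) (y.bind k) ≤ tvDist x y := by
  refine mul_le_mul_of_nonneg_left ?_ (by norm_num)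
  calc ∑ t, |(x.bind k).f t - (y.bind k).f t|
      ≤ ∑ t, ∑ s, |x.f s - y.f s| * (k s).f t := by
        refine Finset.sum_le_sum fun t _ => ?_
        rw [bind_f, bind_f, ← Finset.sum_sub_distrib]
        refine (Finset.abs_sum_le_sum_abs _ _).trans (Finset.sum_le_sum fun s _ => ?_)
        rw [← sub_mul, abs_mul, abs_of_nonneg ((k s).nonneg t)]
    _ = ∑ s, |x.f s - y.f s| := by
        rw [Finset.sum_comm]
        simp only [← Finset.mul_sum, sum_one, mul_one]

end ProbDist

section Automaton

variable {S Act AP : Type} [Fintype S]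

theorem pOf_nonneg (L : S → Finset AP) (μ : ProbDist S) (A : Finset AP) : 0 ≤ pOf L μ A :=
  Finset.sum_nonneg fun s _ => Set.indicator_nonneg (fun s _ => μ.nonneg s) s

variable [DecidableEq AP]

theorem pOf_eq_sum_filter (L : S → Finset AP) (μ : ProbDist S) (A : Finset AP) :
    pOf L μ A = ∑ s with L s = A, μ.f s := by
  rw [pOf, ProbDist.pr, Finset.sum_filter]
  exact Finset.sum_congr rfl fun s _ => by simp [Set.indicator_apply]

variable [Fintype AP]

theorem sum_pOf (L : S → Finset AP) (μ : ProbDist S) : ∑ A, pOf L μ A = 1 := by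
  simp only [pOf_eq_sum_filter]
  rw [Finset.sum_fiberwise, μ.sum_one]

theorem dAP_eq_sum_posPart (L : S → Finset AP) (μ ν : ProbDist S) :
    dAP L μ ν = ∑ A, (pOf L μ A - pOf L ν A)⁺ := by
  rw [dAP, sum_posPart_eq_half_sum_abs]
  rw [Finset.sum_sub_distrib, sum_pOf, sum_pOf, sub_self]

theorem dAP_nonneg (L : S → Finset AP) (μ ν : ProbDist S) : 0 ≤ dAP L μ ν := by
  rw [dAP_eq_sum_posPart]
  exact Finset.sum_nonneg fun A _ => posPart_nonneg _

theorem dAP_le_tvDist (L : S → Finset AP) (μ ν : ProbDist S) : dAP L μ ν ≤ μ.tvDist ν := by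
  refine mul_le_mul_of_nonneg_left ?_ (by norm_num : (0 : ℝ) ≤ 1 / 2)
  calc ∑ A, |pOf L μ A - pOf L ν A|
      ≤ ∑ A, ∑ s with L s = A, |μ.f s - ν.f s| := by
        refine Finset.sum_le_sum fun A _ => ?_
        rw [pOf_eq_sum_filter, pOf_eq_sum_filter, ← Finset.sum_sub_distrib]
        exact Finset.abs_sum_le_sum_abs _ _
    _ = ∑ s, |μ.f s - ν.f s| := Finset.sum_fiberwise _ _ _

end Automaton

section Transitions

variable {S Act AP : Type} [Fintype S] {M : PA S Act AP}

theorem combined_of_trans {s : S} {a : Act} {c : ProbDist S} (h : M.trans s a c) :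
    Combined M s a c :=
  ⟨1, fun _ => 1, fun _ => c, fun _ => zero_le_one, by simp, fun _ => h, fun t => by simp⟩

theorem combined_mixture {ι : Type*} [Fintype ι] {s : S} {a : Act} {p : ι → ℝ}
    (hp0 : ∀ i, 0 ≤ p i) (hp1 : ∑ i, p i = 1) {w : ι → ProbDist S}
    (hw : ∀ i, M.trans s a (w i)) : Combined M s a (ProbDist.mixture p hp0 hp1 w) := by
  let e := (Fintype.equivFin ι).symm
  refine ⟨Fintype.card ι, p ∘ e, w ∘ e, fun j => hp0 (e j), ?_, fun j => hw (e j), fun t => ?_⟩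
  · rw [← hp1]
    exact Fintype.sum_equiv e _ _ fun _ => rfl
  · exact (Fintype.sum_equiv e _ _ fun _ => rfl).symm

theorem image_f_setOf_combined (s : S) (a : Act) :
    ProbDist.f '' {c | Combined M s a c} = convexHull ℝ (ProbDist.f '' {c | M.trans s a c}) := by
  apply Set.Subset.antisymm
  · rintro _ ⟨c, ⟨n, p, w, hp0, hp1, hw, hc⟩, rfl⟩
    have hcf : c.f = ∑ i, p i • (w i).f := by
      ext t
      simp [hc t, Finset.sum_apply]
    rw [hcf]
    exact (convex_convexHull ℝ _).sum_mem (fun i _ => hp0 i) hp1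
      fun i _ => subset_convexHull ℝ _ ⟨w i, hw i, rfl⟩
  · intro x hx
    obtain ⟨ι, _, p, z, hp0, hp1, hz, rfl⟩ := mem_convexHull_iff_exists_fintype.1 hx
    choose w hw hwz using hz
    refine ⟨ProbDist.mixture p hp0 hp1 w, combined_mixture hp0 hp1 hw, ?_⟩
    simp only [ProbDist.mixture_f_eq_sum_smul, hwz]

theorem isCompact_setOf_combined (s : S) (a : Act) : IsCompact {c | Combined M s a c} := by
  rw [ProbDist.isEmbedding_f.isCompact_iff, image_f_setOf_combined]
  exact ((M.imageFinite s a).image _).isCompact_convexHull (𝕜 := ℝ)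

variable (hM : M.InputEnabled)
include hM

theorem lifted_iff_exists_bind {x x' : ProbDist S} {a : Act} :
    Lifted M x a x' ↔ ∃ k : S → ProbDist S, (∀ s, Combined M s a (k s)) ∧ x' = x.bind k := by
  constructor
  · rintro ⟨k, hk, hx'⟩
    choose c hc using fun s => hM s a
    refine ⟨fun s => if 0 < x.f s then k s else c s, fun s => ?_,
      ProbDist.f_injective (funext fun t => ?_)⟩
    · dsimp only
      split_ifs with hs
      exacts [hk s hs, combined_of_trans (hc s)]
    · rw [hx' t, ProbDist.bind_f]
      refine Finset.sum_congr rfl fun s _ => ?_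
      split_ifs with hs
      · rfl
      · rw [le_antisymm (not_lt.1 hs) (x.nonneg s), zero_mul, zero_mul]
  · rintro ⟨k, hk, rfl⟩
    exact ⟨k, fun s _ => hk s, fun _ => rfl⟩

theorem exists_lifted (x : ProbDist S) (a : Act) : ∃ x', Lifted M x a x' := by
  choose c hc using fun s => hM s a
  exact ⟨x.bind c, (lifted_iff_exists_bind hM).2 ⟨c, fun s => combined_of_trans (hc s), rfl⟩⟩

theorem isCompact_setOf_lifted (x : ProbDist S) (a : Act) : IsCompact {x' | Lifted M x a x'} := by
  have : {x' | Lifted M x a x'} = x.bind '' Set.univ.pi fun s => {c | Combined M s a c} := by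
    ext x'
    simp [lifted_iff_exists_bind hM, eq_comm]
  rw [this]
  exact (isCompact_univ_pi fun s => isCompact_setOf_combined s a).image (ProbDist.continuous_bind x)

end Transitions

section Logic

variable {S Act AP : Type} [Fintype S] {M : PA S Act AP} {γ : ℝ}

theorem sat_dia_le {a : Act} {φ : Fml AP Act} {x : ProbDist S} {c : ℝ} (hc : 0 ≤ c)
    (h : ∀ x', Lifted M x a x' → γ * sat M γ φ x' ≤ c) : sat M γ (.dia a φ) x ≤ c :=
  Real.iSup_le (fun x' => Real.iSup_le (h x') hc) hc

variable [Fintype AP] [DecidableEq AP]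

theorem sat_mem_Icc (hγ0 : 0 ≤ γ) (hγ1 : γ ≤ 1) (φ : Fml AP Act) (x : ProbDist S) :
    sat M γ φ x ∈ Set.Icc 0 1 := by
  induction φ generalizing x with
  | atom B =>
    refine ⟨Finset.sum_nonneg fun A _ => pOf_nonneg M.L x A, ?_⟩
    calc ∑ A ∈ B, pOf M.L x A ≤ ∑ A, pOf M.L x A :=
          Finset.sum_le_sum_of_subset_of_nonneg B.subset_univ fun A _ _ => pOf_nonneg M.L x A
      _ = 1 := sum_pOf M.L x
  | oplus φ p ih =>
    exact ⟨le_min (add_nonneg (ih x).1 p.2.1) zero_le_one, min_le_right _ _⟩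
  | neg φ ih =>
    exact ⟨sub_nonneg.2 (ih x).2, sub_le_self _ (ih x).1⟩
  | conj I φs ih =>
    refine ⟨Real.iInf_nonneg fun i => (ih i x).1, ?_⟩
    rcases isEmpty_or_nonempty I with hI | ⟨⟨i⟩⟩
    · exact (Real.iInf_of_isEmpty _).trans_le zero_le_one
    · exact (ciInf_le ⟨0, by rintro _ ⟨j, rfl⟩; exact (ih j x).1⟩ i).trans (ih i x).2
  | dia a φ ih =>
    exact ⟨Real.iSup_nonneg fun x' => Real.iSup_nonneg fun _ => mul_nonneg hγ0 (ih x').1,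
      sat_dia_le zero_le_one fun x' _ => mul_le_one₀ hγ1 (ih x').1 (ih x').2⟩

theorem le_sat_dia (hγ0 : 0 ≤ γ) (hγ1 : γ ≤ 1) {a : Act} {φ : Fml AP Act} {x x' : ProbDist S}
    (hx' : Lifted M x a x') : γ * sat M γ φ x' ≤ sat M γ (.dia a φ) x := by
  have hbdd : BddAbove (Set.range fun y => ⨆ _ : Lifted M x a y, γ * sat M γ φ y) :=
    ⟨1, by
      rintro _ ⟨y, rfl⟩
      exact Real.iSup_le (fun _ => mul_le_one₀ hγ1 (sat_mem_Icc hγ0 hγ1 φ y).1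
        (sat_mem_Icc hγ0 hγ1 φ y).2) zero_le_one⟩
  have : Nonempty (Lifted M x a x') := ⟨hx'⟩
  exact (ciSup_const (ι := Lifted M x a x')).symm.le.trans (le_ciSup hbdd x')

theorem sat_atom_sub_le_dAP (B : Finset (Finset AP)) (x y : ProbDist S) :
    sat M γ (.atom B) x - sat M γ (.atom B) y ≤ dAP M.L x y := by
  rw [dAP_eq_sum_posPart]
  exact (Finset.sum_sub_distrib _ _).symm.trans_le (sum_le_sum_posPart B.subset_univ _)

theorem exists_sat_atom_sub_eq_dAP (x y : ProbDist S) :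
    ∃ B : Finset (Finset AP), sat M γ (.atom B) x - sat M γ (.atom B) y = dAP M.L x y := by
  refine ⟨Finset.univ.filter fun A => 0 ≤ pOf M.L x A - pOf M.L y A, ?_⟩
  rw [dAP_eq_sum_posPart]
  change ∑ A ∈ _, pOf M.L x A - ∑ A ∈ _, pOf M.L y A = _
  rw [← Finset.sum_sub_distrib, Finset.sum_filter]
  refine Finset.sum_congr rfl fun A _ => ?_
  split_ifs with h
  · exact (posPart_eq_self.2 h).symm
  · exact (posPart_eq_zero.2 (le_of_not_ge h)).symm

end Logic

section Bisimulation

variable {S Act AP : Type} [Fintype S] [Fintype AP] [DecidableEq AP] {M : PA S Act AP} {γ ε : ℝ}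
  {x y : ProbDist S}

namespace ApproxBisimilar

theorem symm (h : ApproxBisimilar M γ ε x y) : ApproxBisimilar M γ ε y x :=
  let ⟨R, hR, hxy⟩ := h
  ⟨R, hR, hR.1 ε hxy⟩

theorem dAP_le (h : ApproxBisimilar M γ ε x y) : dAP M.L x y ≤ ε :=
  let ⟨_, hR, hxy⟩ := h
  (hR.2 ε x y hxy).1

theorem nonneg (h : ApproxBisimilar M γ ε x y) : 0 ≤ ε :=
  (dAP_nonneg M.L x y).trans h.dAP_le

theorem exists_lifted (h : ApproxBisimilar M γ ε x y) {a : Act} {x' : ProbDist S}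
    (hx' : Lifted M x a x') : ∃ y', Lifted M y a y' ∧ ApproxBisimilar M γ (ε / γ) x' y' :=
  let ⟨R, hR, hxy⟩ := h
  let ⟨y', hy', hR'⟩ := (hR.2 ε x y hxy).2 a x' hx'
  ⟨y', hy', R, hR, hR'⟩

end ApproxBisimilar

theorem approxBisimilar_of_dist (hγ : 0 ≤ γ) {d : ProbDist S → ProbDist S → ℝ}
    (hcomm : ∀ x y, d x y = d y x) (hdAP : ∀ x y, dAP M.L x y ≤ d x y)
    (hlift : ∀ x y a x', Lifted M x a x' → ∃ y', Lifted M y a y' ∧ d x' y' ≤ d x y / γ)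
    (x y : ProbDist S) : ApproxBisimilar M γ (d x y) x y := by
  refine ⟨fun ε x y => d x y ≤ ε, ⟨fun ε x y h => (hcomm y x).trans_le h, ?_⟩, le_rfl⟩
  intro ε x y h
  refine ⟨(hdAP x y).trans h, fun a x' hx' => ?_⟩
  obtain ⟨y', hy', hd⟩ := hlift x y a x' hx'
  exact ⟨y', hy', hd.trans (div_le_div_of_nonneg_right h hγ)⟩

theorem sat_sub_le_of_approxBisimilar (hγ0 : 0 < γ) (hγ1 : γ ≤ 1) (φ : Fml AP Act)
    (h : ApproxBisimilar M γ ε x y) : sat M γ φ x - sat M γ φ y ≤ ε := by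
  induction φ generalizing ε x y with
  | atom B => exact (sat_atom_sub_le_dAP B x y).trans h.dAP_le
  | oplus φ p ih =>
    have hφ := ih h
    have hε := h.nonneg
    change min _ _ - min _ _ ≤ ε
    grind
  | neg φ ih =>
    have hφ := ih h.symm
    change (1 - _) - (1 - _) ≤ ε
    linarith
  | conj I φs ih =>
    refine sub_le_iff_le_add'.2 (ciInf_le_ciInf_add h.nonneg ⟨0, ?_⟩
      fun i => sub_le_iff_le_add'.1 (ih i h))
    rintro _ ⟨i, rfl⟩
    exact (sat_mem_Icc hγ0.le hγ1 (φs i) x).1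
  | dia a φ ih =>
    refine sub_le_iff_le_add'.2 (sat_dia_le
      (add_nonneg (sat_mem_Icc hγ0.le hγ1 _ y).1 h.nonneg) fun x' hx' => ?_)
    obtain ⟨y', hy', hxy'⟩ := h.exists_lifted hx'
    calc γ * sat M γ φ x' ≤ γ * (sat M γ φ y' + ε / γ) :=
          mul_le_mul_of_nonneg_left (sub_le_iff_le_add'.1 (ih hxy')) hγ0.le
      _ = γ * sat M γ φ y' + ε := by rw [mul_add, mul_div_cancel₀ ε hγ0.ne']
      _ ≤ sat M γ (.dia a φ) y + ε := by gcongr; exact le_sat_dia hγ0.le hγ1 hy'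

theorem abs_sat_sub_le_of_approxBisimilar (hγ0 : 0 < γ) (hγ1 : γ ≤ 1) (φ : Fml AP Act)
    (h : ApproxBisimilar M γ ε x y) : |sat M γ φ x - sat M γ φ y| ≤ ε :=
  abs_sub_le_iff.2 ⟨sat_sub_le_of_approxBisimilar hγ0 hγ1 φ h,
    sat_sub_le_of_approxBisimilar hγ0 hγ1 φ h.symm⟩

theorem abs_sat_sub_le_tvDist (hM : M.InputEnabled) (hγ0 : 0 < γ) (hγ1 : γ ≤ 1)
    (φ : Fml AP Act) (x y : ProbDist S) : |sat M γ φ x - sat M γ φ y| ≤ x.tvDist y := by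
  refine abs_sat_sub_le_of_approxBisimilar hγ0 hγ1 φ
    (approxBisimilar_of_dist hγ0.le ProbDist.tvDist_comm (dAP_le_tvDist M.L) ?_ x y)
  intro x y a x' hx'
  obtain ⟨k, hk, rfl⟩ := (lifted_iff_exists_bind hM).1 hx'
  exact ⟨y.bind k, (lifted_iff_exists_bind hM).2 ⟨k, hk, rfl⟩,
    (ProbDist.tvDist_bind_le x y k).trans (le_div_self (ProbDist.tvDist_nonneg x y) hγ0 hγ1)⟩

end Bisimulation

section LogicalDistance

variable {S Act AP : Type} [Fintype S] {M : PA S Act AP} {γ : ℝ}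

instance : Nonempty (Fml AP Act) := ⟨.atom ∅⟩

noncomputable def logicDist (M : PA S Act AP) (γ : ℝ) (x y : ProbDist S) : ℝ :=
  ⨆ φ : Fml AP Act, |sat M γ φ x - sat M γ φ y|

theorem logicDist_le {x y : ProbDist S} {c : ℝ}
    (h : ∀ φ : Fml AP Act, |sat M γ φ x - sat M γ φ y| ≤ c) : logicDist M γ x y ≤ c :=
  ciSup_le h

theorem logicDist_nonneg (x y : ProbDist S) : 0 ≤ logicDist M γ x y :=
  Real.iSup_nonneg fun _ => abs_nonneg _

theorem logicDist_comm (x y : ProbDist S) : logicDist M γ x y = logicDist M γ y x := by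
  simp only [logicDist, abs_sub_comm]

theorem exists_lt_sat_sub_of_lt_logicDist {x y : ProbDist S} {c : ℝ}
    (h : c < logicDist M γ x y) : ∃ φ : Fml AP Act, c < sat M γ φ x - sat M γ φ y := by
  obtain ⟨φ, hφ⟩ := exists_lt_of_lt_ciSup h
  rcases le_total 0 (sat M γ φ x - sat M γ φ y) with hφ0 | hφ0
  · exact ⟨φ, by rwa [abs_of_nonneg hφ0] at hφ⟩
  · refine ⟨.neg φ, ?_⟩
    rw [abs_of_nonpos hφ0] at hφ
    change c < (1 - _) - (1 - _)
    linarith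

variable [Fintype AP] [DecidableEq AP]

theorem logicDist_le_of_approxBisimilar (hγ0 : 0 < γ) (hγ1 : γ ≤ 1) {ε : ℝ} {x y : ProbDist S}
    (h : ApproxBisimilar M γ ε x y) : logicDist M γ x y ≤ ε :=
  logicDist_le fun φ => abs_sat_sub_le_of_approxBisimilar hγ0 hγ1 φ h

section Bounded

variable (hγ0 : 0 ≤ γ) (hγ1 : γ ≤ 1)
include hγ0 hγ1

theorem abs_sat_sub_le_logicDist (φ : Fml AP Act) (x y : ProbDist S) :
    |sat M γ φ x - sat M γ φ y| ≤ logicDist M γ x y := by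
  refine le_ciSup (f := fun ψ : Fml AP Act => |sat M γ ψ x - sat M γ ψ y|) ⟨1, ?_⟩ φ
  rintro _ ⟨ψ, rfl⟩
  have hx := sat_mem_Icc (M := M) hγ0 hγ1 ψ x
  have hy := sat_mem_Icc (M := M) hγ0 hγ1 ψ y
  exact abs_sub_le_iff.2 ⟨by linarith [hx.2, hy.1], by linarith [hx.1, hy.2]⟩

theorem logicDist_triangle (x y z : ProbDist S) :
    logicDist M γ x z ≤ logicDist M γ x y + logicDist M γ y z :=
  logicDist_le fun φ => (abs_sub_le _ _ _).trans (add_le_add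
    (abs_sat_sub_le_logicDist hγ0 hγ1 φ x y) (abs_sat_sub_le_logicDist hγ0 hγ1 φ y z))

theorem dAP_le_logicDist (x y : ProbDist S) : dAP M.L x y ≤ logicDist M γ x y := by
  obtain ⟨B, hB⟩ := exists_sat_atom_sub_eq_dAP (M := M) (γ := γ) x y
  exact hB ▸ (le_abs_self _).trans (abs_sat_sub_le_logicDist hγ0 hγ1 _ x y)

end Bounded

theorem continuous_logicDist_right (hM : M.InputEnabled) (hγ0 : 0 < γ) (hγ1 : γ ≤ 1)
    (x : ProbDist S) : Continuous fun y => logicDist M γ x y := by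
  have hle_tv : ∀ u v : ProbDist S, logicDist M γ u v ≤ u.tvDist v := fun u v =>
    logicDist_le fun φ => abs_sat_sub_le_tvDist hM hγ0 hγ1 φ u v
  refine continuous_of_abs_sub_le ProbDist.continuous_tvDist_left ProbDist.tvDist_self
    fun u v => abs_sub_le_iff.2 ⟨?_, ?_⟩
  · linarith [logicDist_triangle (M := M) hγ0.le hγ1 x v u, logicDist_comm (M := M) (γ := γ) v u,
      hle_tv u v]
  · linarith [logicDist_triangle (M := M) hγ0.le hγ1 x u v, hle_tv u v]

end LogicalDistance

section Completeness

variable {S Act AP : Type} [Fintype S] [Fintype AP] [DecidableEq AP] {M : PA S Act AP} {γ : ℝ}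

noncomputable def Fml.raiseAt (M : PA S Act AP) (γ : ℝ) (φ : Fml AP Act) (x : ProbDist S) :
    Fml AP Act :=
  .oplus φ (Set.projIcc 0 1 zero_le_one (1 - sat M γ φ x))

section Bounded

variable (hγ0 : 0 ≤ γ) (hγ1 : γ ≤ 1)
include hγ0 hγ1

theorem one_sub_sat_mem_Icc (φ : Fml AP Act) (x : ProbDist S) :
    1 - sat M γ φ x ∈ Set.Icc 0 1 :=
  ⟨sub_nonneg.2 (sat_mem_Icc hγ0 hγ1 φ x).2, sub_le_self _ (sat_mem_Icc hγ0 hγ1 φ x).1⟩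

theorem sat_raiseAt_self (φ : Fml AP Act) (x : ProbDist S) :
    sat M γ (Fml.raiseAt M γ φ x) x = 1 := by
  change min (_ + ((Set.projIcc 0 1 zero_le_one _ : Set.Icc (0 : ℝ) 1) : ℝ)) 1 = 1
  rw [Set.projIcc_of_mem _ (one_sub_sat_mem_Icc hγ0 hγ1 φ x), add_sub_cancel, min_self]

theorem sat_raiseAt_le (φ : Fml AP Act) (x y : ProbDist S) :
    sat M γ (Fml.raiseAt M γ φ x) y ≤ sat M γ φ y + (1 - sat M γ φ x) := by
  refine (min_le_left _ _).trans_eq ?_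
  rw [Set.projIcc_of_mem _ (one_sub_sat_mem_Icc hγ0 hγ1 φ x)]

theorem exists_sat_eq_one_of_lt_logicDist {x : ProbDist S} {T : Set (ProbDist S)}
    (hT : T.Nonempty) {c : ℝ} (h : ∀ y ∈ T, c < logicDist M γ x y) :
    ∃ Ψ : Fml AP Act, sat M γ Ψ x = 1 ∧ ∀ y ∈ T, sat M γ Ψ y ≤ 1 - c := by
  choose φ hφ using fun y : T => exists_lt_sat_sub_of_lt_logicDist (h y y.2)
  have : Nonempty T := hT.to_subtype
  refine ⟨.conj T fun y => Fml.raiseAt M γ (φ y) x, ?_, fun y hy => ?_⟩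
  · change ⨅ y : T, sat M γ (Fml.raiseAt M γ (φ y) x) x = 1
    simp only [sat_raiseAt_self hγ0 hγ1, ciInf_const]
  · calc sat M γ (.conj T fun z => Fml.raiseAt M γ (φ z) x) y
        ≤ sat M γ (Fml.raiseAt M γ (φ ⟨y, hy⟩) x) y :=
          ciInf_le (f := fun z : T => sat M γ (Fml.raiseAt M γ (φ z) x) y)
            ⟨0, by rintro _ ⟨z, rfl⟩; exact (sat_mem_Icc hγ0 hγ1 _ y).1⟩ ⟨y, hy⟩
      _ ≤ sat M γ (φ ⟨y, hy⟩) y + (1 - sat M γ (φ ⟨y, hy⟩) x) := sat_raiseAt_le hγ0 hγ1 _ x y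
      _ ≤ 1 - c := by linarith [hφ ⟨y, hy⟩]

end Bounded

theorem exists_lifted_logicDist_le (hM : M.InputEnabled) (hγ0 : 0 < γ) (hγ1 : γ ≤ 1)
    {x y x' : ProbDist S} {a : Act} (hx' : Lifted M x a x') :
    ∃ y', Lifted M y a y' ∧ logicDist M γ x' y' ≤ logicDist M γ x y / γ := by
  obtain ⟨y₀, hy₀, hmin⟩ := (isCompact_setOf_lifted hM y a).exists_isMinOn
    (exists_lifted hM y a) (continuous_logicDist_right hM hγ0 hγ1 x').continuousOn
  refine ⟨y₀, hy₀, not_lt.1 fun hlt => ?_⟩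
  obtain ⟨c, hc, hcy₀⟩ := exists_between hlt
  obtain ⟨Ψ, hΨx', hΨ⟩ := exists_sat_eq_one_of_lt_logicDist hγ0.le hγ1 ⟨y₀, hy₀⟩
    fun y' hy' => hcy₀.trans_le (hmin hy')
  have hc1 : 0 ≤ 1 - c := (sat_mem_Icc hγ0.le hγ1 Ψ y₀).1.trans (hΨ y₀ hy₀)
  have hx : γ ≤ sat M γ (.dia a Ψ) x := by
    simpa only [hΨx', mul_one] using le_sat_dia hγ0.le hγ1 (φ := Ψ) hx'
  have hy : sat M γ (.dia a Ψ) y ≤ γ * (1 - c) :=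
    sat_dia_le (mul_nonneg hγ0.le hc1) fun y' hy' =>
      mul_le_mul_of_nonneg_left (hΨ y' hy') hγ0.le
  have hxy := (le_abs_self _).trans (abs_sat_sub_le_logicDist (M := M) hγ0.le hγ1 (.dia a Ψ) x y)
  have hγc := (div_lt_iff₀' hγ0).1 hc
  linarith

theorem approxBisimilar_logicDist (hM : M.InputEnabled) (hγ0 : 0 < γ) (hγ1 : γ ≤ 1)
    (x y : ProbDist S) : ApproxBisimilar M γ (logicDist M γ x y) x y :=
  approxBisimilar_of_dist hγ0.le logicDist_comm (dAP_le_logicDist hγ0.le hγ1)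
    (fun _ _ _ _ hx' => exists_lifted_logicDist_le hM hγ0 hγ1 hx') x y

end Completeness

theorem stmt14 {S Act AP : Type} [Fintype S] [Fintype AP] [DecidableEq AP]
    (M : PA S Act AP) (hM : M.InputEnabled) (γ : ℝ) (hγ0 : 0 < γ) (hγ1 : γ ≤ 1)
    (μ ν : ProbDist S) :
    Db M γ μ ν = ⨆ φ : Fml AP Act, |sat M γ φ μ - sat M γ φ ν| := by
  refine IsLeast.csInf_eq ⟨⟨logicDist_nonneg μ ν, approxBisimilar_logicDist hM hγ0 hγ1 μ ν⟩, ?_⟩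
  rintro ε ⟨-, h⟩
  exact logicDist_le_of_approxBisimilar hγ0 hγ1 h
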